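/- There exists a constant C > 0 (depending only on T) such that for all x, y ∈ [0,π] and all t ∈ (0,T], ∫_0^t ∫_0^π |G_{t−r}(x,z) − G_{t−r}(y,z)|² dz dr ≤ C|x−y|². -/

import Mathlib

/-- `φ_j(x) = √(2/π)·sin(jx)`. -/
noncomputable def phi (j : ℕ) (x : ℝ) : ℝ := Real.sqrt (2 / Real.pi) * Real.sin (j * x)

/-- The Green function `G_t(x,y) = Σ_{j=1}^∞ e^{−j⁴t} φ_j(x) φ_j(y)` of `∂_t + Δ²`
on `(0,π)` with Dirichlet boundary conditions. -/
noncomputable def G (t x y : ℝ) : ℝ :=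
  ∑' j : ℕ, Real.exp (-((j : ℝ) + 1) ^ 4 * t) * phi (j + 1) x * phi (j + 1) y

/-!
Expand `G_s(x,·) - G_s(y,·)` in the orthonormal basis `φ_{j+1}` of `L²(0,π)`: by Parseval the
`z`-integral is `∑ⱼ e^{-2(j+1)⁴ s} (φ_{j+1}(x) - φ_{j+1}(y))²`, and integrating over `s = t - r`
bounds the `j`-th mode by `(φ_{j+1}(x) - φ_{j+1}(y))² / (2(j+1)⁴)`. Since `φ_{j+1}` is
`√(2/π)(j+1)`-Lipschitz, this is at most `|x - y|² / (π (j+1)²)`, and `∑ 1/(j+1)² = π²/6` gives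
the constant `C = π/6`, uniformly in `t > 0`.
-/

open MeasureTheory Real Set

section SeriesIntegral

variable {α : Type*} [MeasurableSpace α] {μ : Measure α}

theorem measurable_tsum_of_summable {f : ℕ → α → ℝ} (hf : ∀ n, Measurable (f n))
    (hs : ∀ a, Summable fun n => f n a) : Measurable fun a => ∑' n, f n a :=
  measurable_of_tendsto_metrizable (f := fun n a => ∑ i ∈ Finset.range n, f i a)
    (fun _ => Finset.measurable_sum _ fun i _ => hf i)
    (tendsto_pi_nhds.2 fun a => (hs a).hasSum.tendsto_sum_nat)

theorem hasSum_integral_of_norm_le_summable [IsFiniteMeasure μ] {ι E : Type*} [Countable ι]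
    [NormedAddCommGroup E] [NormedSpace ℝ E] [CompleteSpace E] {f : ι → α → E} {b : ι → ℝ}
    (hf : ∀ i, AEStronglyMeasurable (f i) μ) (hb : Summable b) (hfb : ∀ i a, ‖f i a‖ ≤ b i) :
    HasSum (fun i => ∫ a, f i a ∂μ) (∫ a, ∑' i, f i a ∂μ) :=
  hasSum_integral_of_dominated_convergence (fun i _ => b i) hf
    (fun i => ae_of_all _ (hfb i)) (ae_of_all _ fun _ => hb) (integrable_const _)
    (ae_of_all _ fun a => (hb.of_norm_bounded fun i => hfb i a).hasSum)

theorem integral_sq_tsum_of_orthonormal [IsFiniteMeasure μ] {e : ℕ → α → ℝ} {K : ℝ}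
    (he : ∀ j, Measurable (e j)) (heK : ∀ j a, |e j a| ≤ K)
    (horth : ∀ j k, ∫ a, e j a * e k a ∂μ = if j = k then 1 else 0)
    {c : ℕ → ℝ} (hc : Summable fun j => |c j|) :
    ∫ a, (∑' j, c j * e j a) ^ 2 ∂μ = ∑' j, c j ^ 2 := by
  set F := fun a => ∑' j, c j * e j a with hF
  have hterm : ∀ j a, ‖c j * e j a‖ ≤ |c j| * K := fun j a => by
    rw [norm_mul, Real.norm_eq_abs, Real.norm_eq_abs]
    exact mul_le_mul_of_nonneg_left (heK j a) (abs_nonneg _)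
  have hFmeas : Measurable F := measurable_tsum_of_summable
    (fun j => measurable_const.mul (he j)) fun a => (hc.mul_right K).of_norm_bounded (hterm · a)
  have hFK : ∀ a, |F a| ≤ (∑' j, |c j|) * K := fun a =>
    tsum_of_norm_bounded (hc.hasSum.mul_right K) (hterm · a)
  have hcoeff : ∀ j, ∫ a, e j a * F a ∂μ = c j := by
    intro j
    have hsum := hasSum_integral_of_norm_le_summable (μ := μ)
      (f := fun k a => c k * (e j a * e k a)) (b := fun k => |c k| * (K * K))
      (fun k => (measurable_const.mul ((he j).mul (he k))).aestronglyMeasurable)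
      (hc.mul_right _) fun k a => by
        rw [norm_mul, norm_mul, Real.norm_eq_abs, Real.norm_eq_abs, Real.norm_eq_abs]
        exact mul_le_mul_of_nonneg_left
          (mul_le_mul (heK j a) (heK k a) (abs_nonneg _) ((abs_nonneg _).trans (heK j a)))
          (abs_nonneg _)
    have hsingle : HasSum (fun k => ∫ a, c k * (e j a * e k a) ∂μ) (c j) := by
      simp only [integral_const_mul, horth]
      simpa using hasSum_single (f := fun k => c k * if j = k then (1 : ℝ) else 0) j
        fun k hk => by simp [Ne.symm hk]
    rw [hsingle.unique hsum]
    congr 1 with a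
    rw [hF, ← tsum_mul_left]
    congr 1 with k
    ring
  have hsq := hasSum_integral_of_norm_le_summable (μ := μ)
    (f := fun j a => c j * (e j a * F a)) (b := fun j => |c j| * (K * ((∑' j, |c j|) * K)))
    (fun j => (measurable_const.mul ((he j).mul hFmeas)).aestronglyMeasurable)
    (hc.mul_right _) fun j a => by
      rw [norm_mul, norm_mul, Real.norm_eq_abs, Real.norm_eq_abs, Real.norm_eq_abs]
      exact mul_le_mul_of_nonneg_left
        (mul_le_mul (heK j a) (hFK a) (abs_nonneg _) ((abs_nonneg _).trans (heK j a)))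
        (abs_nonneg _)
  simp only [integral_const_mul, hcoeff, ← sq] at hsq
  rw [hsq.tsum_eq]
  congr 1 with a
  rw [sq, ← tsum_mul_right]
  congr 1 with j
  ring

end SeriesIntegral

theorem abs_phi_le (j : ℕ) (x : ℝ) : |phi j x| ≤ √(2 / π) := by
  rw [phi, abs_mul, abs_of_nonneg (sqrt_nonneg _)]
  exact mul_le_of_le_one_right (sqrt_nonneg _) (abs_sin_le_one _)

theorem continuous_phi (j : ℕ) : Continuous (phi j) := by
  unfold phi
  fun_prop

theorem abs_phi_sub_phi_le (j : ℕ) (x y : ℝ) :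
    |phi j x - phi j y| ≤ √(2 / π) * j * |x - y| := by
  rw [phi, phi, ← mul_sub, abs_mul, abs_of_nonneg (sqrt_nonneg _), mul_assoc]
  refine mul_le_mul_of_nonneg_left ?_ (sqrt_nonneg _)
  calc |sin (j * x) - sin (j * y)| ≤ |j * x - j * y| := abs_sin_sub_sin_le _ _
    _ = j * |x - y| := by rw [← mul_sub, abs_mul, Nat.abs_cast]

theorem integral_cos_int_mul (n : ℤ) :
    ∫ z in (0 : ℝ)..π, cos (n * z) = if n = 0 then π else 0 := by
  split_ifs with hn
  · simp [hn]
  · have hn' : (n : ℝ) ≠ 0 := Int.cast_ne_zero.2 hn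
    rw [intervalIntegral.integral_comp_mul_left cos hn', integral_cos, mul_zero, sin_zero,
      sin_int_mul_pi, sub_zero, smul_zero]

theorem integral_sin_nat_mul_mul_sin_nat_mul (m : ℕ) {k : ℕ} (hk : k ≠ 0) :
    ∫ z in (0 : ℝ)..π, sin (m * z) * sin (k * z) = if m = k then π / 2 else 0 := by
  have hprod : ∀ z : ℝ, sin (m * z) * sin (k * z)
      = (cos (((m - k : ℤ) : ℝ) * z) - cos (((m + k : ℤ) : ℝ) * z)) / 2 := fun z => by
    push_cast
    rw [sub_mul, add_mul, cos_sub, cos_add]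
    ring
  have hcos : ∀ n : ℤ, IntervalIntegrable (fun z => cos (n * z)) volume 0 π := fun n =>
    (by fun_prop : Continuous fun z : ℝ => cos (n * z)).intervalIntegrable _ _
  simp_rw [hprod]
  rw [intervalIntegral.integral_div, intervalIntegral.integral_sub (hcos _) (hcos _),
    integral_cos_int_mul, integral_cos_int_mul]
  split_ifs <;> first | omega | ring

theorem integral_phi_succ_mul_phi_succ (j k : ℕ) :
    ∫ z in (0 : ℝ)..π, phi (j + 1) z * phi (k + 1) z = if j = k then 1 else 0 := by
  have hsq : √(2 / π) * √(2 / π) = 2 / π := mul_self_sqrt (by positivity)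
  simp_rw [phi, mul_mul_mul_comm _ (sin _), hsq, intervalIntegral.integral_const_mul]
  rw [integral_sin_nat_mul_mul_sin_nat_mul _ k.succ_ne_zero]
  split_ifs <;> first | omega | simp

theorem sq_phi_succ_sub_phi_succ_le (j : ℕ) (x y : ℝ) :
    (phi (j + 1) x - phi (j + 1) y) ^ 2 ≤ 2 / π * ((j : ℝ) + 1) ^ 2 * |x - y| ^ 2 := by
  calc (phi (j + 1) x - phi (j + 1) y) ^ 2 = |phi (j + 1) x - phi (j + 1) y| ^ 2 :=
        (sq_abs _).symm
    _ ≤ (√(2 / π) * ((j + 1 : ℕ) : ℝ) * |x - y|) ^ 2 :=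
      pow_le_pow_left₀ (abs_nonneg _) (abs_phi_sub_phi_le _ x y) 2
    _ = 2 / π * ((j : ℝ) + 1) ^ 2 * |x - y| ^ 2 := by
      rw [mul_pow, mul_pow, sq_sqrt (by positivity)]
      push_cast
      ring

theorem hasSum_one_div_succ_sq : HasSum (fun j : ℕ => 1 / ((j : ℝ) + 1) ^ 2) (π ^ 2 / 6) := by
  simpa using (hasSum_nat_add_iff' 1).2 hasSum_zeta_two

theorem summable_exp_neg_succ_pow_four_mul {s : ℝ} (hs : 0 < s) :
    Summable fun j : ℕ => exp (-((j : ℝ) + 1) ^ 4 * s) := by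
  have h := summable_exp_nat_mul_of_ge (neg_lt_zero.2 hs) (f := fun j => ((j : ℝ) + 1) ^ 4)
    fun i => by
      have : (1 : ℝ) ≤ i + 1 := by linarith [i.cast_nonneg (α := ℝ)]
      linarith [le_self_pow₀ this (by norm_num : 4 ≠ 0)]
  simpa only [neg_mul, mul_comm s] using h

theorem G_sub_G_eq_tsum {s : ℝ} (hs : 0 < s) (x y z : ℝ) :
    G s x z - G s y z = ∑' j : ℕ,
      exp (-((j : ℝ) + 1) ^ 4 * s) * (phi (j + 1) x - phi (j + 1) y) * phi (j + 1) z := by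
  have hsum : ∀ x, Summable fun j : ℕ =>
      exp (-((j : ℝ) + 1) ^ 4 * s) * phi (j + 1) x * phi (j + 1) z := fun x =>
    ((summable_exp_neg_succ_pow_four_mul hs).mul_right (√(2 / π) * √(2 / π))).of_norm_bounded
      fun j => by
        rw [norm_mul, norm_mul, norm_of_nonneg (exp_pos _).le, mul_assoc, norm_eq_abs,
          norm_eq_abs]
        exact mul_le_mul_of_nonneg_left
          (mul_le_mul (abs_phi_le _ _) (abs_phi_le _ _) (abs_nonneg _) (sqrt_nonneg _))
          (exp_pos _).le
  rw [G, G, ← (hsum x).tsum_sub (hsum y)]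
  congr 1 with j
  ring

theorem integral_sq_G_sub_G {s : ℝ} (hs : 0 < s) (x y : ℝ) :
    ∫ z in (0 : ℝ)..π, |G s x z - G s y z| ^ 2 = ∑' j : ℕ,
      exp (-(2 * ((j : ℝ) + 1) ^ 4) * s) * (phi (j + 1) x - phi (j + 1) y) ^ 2 := by
  have hc : Summable fun j : ℕ =>
      |exp (-((j : ℝ) + 1) ^ 4 * s) * (phi (j + 1) x - phi (j + 1) y)| :=
    ((summable_exp_neg_succ_pow_four_mul hs).mul_right (2 * √(2 / π))).of_nonneg_of_le
      (fun _ => abs_nonneg _) fun j => by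
        rw [abs_mul, abs_of_pos (exp_pos _)]
        refine mul_le_mul_of_nonneg_left ((abs_sub _ _).trans ?_) (exp_pos _).le
        linarith [abs_phi_le (j + 1) x, abs_phi_le (j + 1) y]
  simp_rw [sq_abs, G_sub_G_eq_tsum hs]
  rw [intervalIntegral.integral_of_le pi_pos.le, integral_sq_tsum_of_orthonormal
    (fun j => (continuous_phi (j + 1)).measurable) (fun j => abs_phi_le (j + 1))
    (fun j k => ?_) hc]
  · congr 1 with j
    rw [mul_pow, ← exp_nat_mul]
    congr 2
    push_cast
    ring
  · rw [← intervalIntegral.integral_of_le pi_pos.le]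
    exact integral_phi_succ_mul_phi_succ j k

theorem integral_exp_neg_mul_sub {c : ℝ} (hc : c ≠ 0) (t : ℝ) :
    ∫ r in (0 : ℝ)..t, exp (-c * (t - r)) = (1 - exp (-c * t)) / c := by
  have hderiv : ∀ r ∈ uIcc 0 t,
      HasDerivAt (fun r => exp (-c * (t - r)) / c) (exp (-c * (t - r))) r := fun r _ => by
    refine ((((hasDerivAt_id r).const_sub t).const_mul (-c)).exp.div_const c).congr_deriv ?_
    simp only [id]
    field_simp
  rw [intervalIntegral.integral_eq_sub_of_hasDerivAt hderiv
    (Continuous.intervalIntegrable (by fun_prop) _ _)]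
  simp only [sub_self, mul_zero, exp_zero, sub_zero]
  ring

-- `modeEnergy t x y j = ∫₀ᵗ e^{-2(j+1)⁴(t-r)} dr · (φ_{j+1}(x) - φ_{j+1}(y))²`
noncomputable def modeEnergy (t x y : ℝ) (j : ℕ) : ℝ :=
  (1 - exp (-(2 * ((j : ℝ) + 1) ^ 4) * t)) / (2 * ((j : ℝ) + 1) ^ 4)
    * (phi (j + 1) x - phi (j + 1) y) ^ 2

theorem modeEnergy_le (t x y : ℝ) (j : ℕ) :
    modeEnergy t x y j ≤ |x - y| ^ 2 / π * (1 / ((j : ℝ) + 1) ^ 2) := by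
  rw [modeEnergy]
  calc _ ≤ 1 / (2 * ((j : ℝ) + 1) ^ 4) * (2 / π * ((j : ℝ) + 1) ^ 2 * |x - y| ^ 2) := by
        gcongr
        · linarith [exp_pos (-(2 * ((j : ℝ) + 1) ^ 4) * t)]
        · exact sq_phi_succ_sub_phi_succ_le j x y
    _ = |x - y| ^ 2 / π * (1 / ((j : ℝ) + 1) ^ 2) := by
        field_simp

theorem hasSum_modeEnergy {t : ℝ} (ht : 0 < t) (x y : ℝ) :
    HasSum (modeEnergy t x y)
      (∫ r in (0 : ℝ)..t, ∫ z in (0 : ℝ)..π, |G (t - r) x z - G (t - r) y z| ^ 2) := by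
  set g := fun (j : ℕ) (r : ℝ) =>
    exp (-(2 * ((j : ℝ) + 1) ^ 4) * (t - r)) * (phi (j + 1) x - phi (j + 1) y) ^ 2
  have hg : ∀ j, ∫ r in Ioo 0 t, g j r = modeEnergy t x y j := fun j => by
    rw [modeEnergy, ← integral_Ioc_eq_integral_Ioo, ← intervalIntegral.integral_of_le ht.le,
      intervalIntegral.integral_mul_const, integral_exp_neg_mul_sub (by positivity)]
  have hgint : ∀ j, Integrable (g j) (volume.restrict (Ioo 0 t)) := fun j =>
    (Continuous.integrableOn_Icc (by fun_prop)).mono_set Ioo_subset_Icc_self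
  have hgnorm : ∀ j, ∫ r in Ioo 0 t, ‖g j r‖ = ∫ r in Ioo 0 t, g j r := fun j =>
    integral_congr_ae (ae_of_all _ fun r => norm_of_nonneg (by positivity))
  have hsum : Summable (modeEnergy t x y) :=
    (hasSum_one_div_succ_sq.mul_left (|x - y| ^ 2 / π)).summable.of_nonneg_of_le
      (fun j => by rw [← hg j]; exact integral_nonneg fun r => by positivity)
      (modeEnergy_le t x y)
  have h := hasSum_integral_of_summable_integral_norm hgint (by simpa only [hgnorm, hg] using hsum)
  simp only [hg] at h
  rwa [intervalIntegral.integral_of_le ht.le, integral_Ioc_eq_integral_Ioo,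
    setIntegral_congr_fun measurableSet_Ioo fun r hr => integral_sq_G_sub_G (sub_pos.2 hr.2) x y]

theorem stmt3_general (T : ℝ) :
    ∃ C : ℝ, 0 < C ∧ ∀ x ∈ Set.Icc (0 : ℝ) Real.pi, ∀ y ∈ Set.Icc (0 : ℝ) Real.pi,
      ∀ t ∈ Set.Ioc (0 : ℝ) T,
      (∫ r in (0 : ℝ)..t, ∫ z in (0 : ℝ)..Real.pi,
        |G (t - r) x z - G (t - r) y z| ^ 2) ≤ C * |x - y| ^ 2 := by
  refine ⟨π / 6, by positivity, fun x _ y _ t ht => ?_⟩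
  calc _ ≤ |x - y| ^ 2 / π * (π ^ 2 / 6) :=
        hasSum_le (modeEnergy_le t x y) (hasSum_modeEnergy ht.1 x y)
          (hasSum_one_div_succ_sq.mul_left _)
    _ = π / 6 * |x - y| ^ 2 := by
        field_simp

/-- There exists `C = C(T) > 0` such that for all `x, y ∈ [0,π]` and `t ∈ (0,T]`,
`∫_0^t ∫_0^π |G_{t−r}(x,z) − G_{t−r}(y,z)|² dz dr ≤ C|x−y|²`. -/
theorem stmt3 (T : ℝ) (hT : 0 < T) :
    ∃ C : ℝ, 0 < C ∧ ∀ x ∈ Set.Icc (0 : ℝ) Real.pi, ∀ y ∈ Set.Icc (0 : ℝ) Real.pi,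
      ∀ t ∈ Set.Ioc (0 : ℝ) T,
      (∫ r in (0 : ℝ)..t, ∫ z in (0 : ℝ)..Real.pi,
        |G (t - r) x z - G (t - r) y z| ^ 2) ≤ C * |x - y| ^ 2 :=
  stmt3_general T
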